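/- arXiv:2201.08113 — 2 statements merged into one kernel-verified Lean document; each statement's English description precedes it below -/
import Mathlib

section
/- Assume Σ_ℓ(0) is integral, let α ∈ Σ_ℓ, and let M_α be the submonoid of ℤ × X generated by (1, 0) and {(D_ℓ(y), y − α) : y ∈ X}. Then there exists a real number M* > 0 such that for every integer t ≥ 0 and every x ∈ X with C_ℓ(x) ≥ 2^t·M*, one has (D_ℓ(x) − t, x − α) ∈ M_α. (Equivalently, the monomial s^{D_ℓ(x)}·w^{x−α} lies in I^t·A_{ℓ,α,0}, where I is the maximal ideal of the discrete valuation ring R.) -/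
/-!
Writing `x = γ + 2ℓφ(z)` with `γ ∈ Σ_ℓ` and expanding `B̄` gives `4ℓN·D_ℓ(x) = B̄(x,x) - B̄(γ,γ)`;
since `Σ_ℓ` is bounded, `D_ℓ` differs from `C_ℓ` by a bounded amount. Split a large `x` as
`x₁ + (x₂ - α)` with `x₁ ≈ ¾x` and `x₂ ≈ ¼x + α`. As `1 - (¾)² - (¼)² > 0`, the excess
`D_ℓ(x) - D_ℓ(x₁) - D_ℓ(x₂)` is positive once `C_ℓ(x)` is large, and `(¾)² > ½` gives
`C_ℓ(x₁) ≥ C_ℓ(x)/2`. By induction on `t`, `(D_ℓ(x) - t, x - α)` is then the sum of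
`(D_ℓ(x₁) - (t - 1), x₁ - α)`, the generator `(D_ℓ(x₂), x₂ - α)` and copies of `(1, 0)`.
-/

open scoped BigOperators Pointwise

namespace NFC

/-- The coordinatewise embedding of the lattice `X = ℤ^g` into `X_ℝ = ℝ^g`. -/
def iota {g : ℕ} (x : Fin g → ℤ) : Fin g → ℝ := fun i => (x i : ℝ)

/-- The ℝ-linear extension of an integral linear functional `u ∈ X^∨` to `X_ℝ`. -/
noncomputable def extd {g : ℕ} (u : (Fin g → ℤ) →ₗ[ℤ] ℤ) (x : Fin g → ℝ) : ℝ :=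
  ∑ i, (u (Pi.single i 1) : ℝ) * x i

/-- `E_ℓ(u) = ℓ · u(φ(u))`. -/
def El {g : ℕ} {Y : Submodule ℤ (Fin g → ℤ)}
    (φ : ((Fin g → ℤ) →ₗ[ℤ] ℤ) → Y) (ℓ : ℕ) (u : (Fin g → ℤ) →ₗ[ℤ] ℤ) : ℤ :=
  (ℓ : ℤ) * u (φ u : Fin g → ℤ)

/-- `Σ_ℓ = {α ∈ X : E_ℓ(u) + u(α) ≥ 0 for all u ∈ X^∨}`. -/
def SigmaL {g : ℕ} {Y : Submodule ℤ (Fin g → ℤ)}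
    (φ : ((Fin g → ℤ) →ₗ[ℤ] ℤ) → Y) (ℓ : ℕ) : Set (Fin g → ℤ) :=
  {α | ∀ u : (Fin g → ℤ) →ₗ[ℤ] ℤ, 0 ≤ El φ ℓ u + u α}

/-- The Voronoi polytope `Σ_ℓ(c)`, defined w.r.t. the norm `‖z‖ = √(B̄(z,z))`. -/
noncomputable def VorP {g : ℕ} {Y : Submodule ℤ (Fin g → ℤ)}
    (Bb : (Fin g → ℝ) →ₗ[ℝ] (Fin g → ℝ) →ₗ[ℝ] ℝ)
    (φ : ((Fin g → ℤ) →ₗ[ℤ] ℤ) → Y) (ℓ : ℕ)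
    (c : (Fin g → ℤ) →ₗ[ℤ] ℤ) : Set (Fin g → ℝ) :=
  {x | ∀ u : (Fin g → ℤ) →ₗ[ℤ] ℤ,
    Real.sqrt (Bb (x - iota ((2 * (ℓ : ℤ)) • ((φ c : Fin g → ℤ))))
               (x - iota ((2 * (ℓ : ℤ)) • ((φ c : Fin g → ℤ))))) ≤
    Real.sqrt (Bb (x - iota ((2 * (ℓ : ℤ)) • ((φ u : Fin g → ℤ))))
               (x - iota ((2 * (ℓ : ℤ)) • ((φ u : Fin g → ℤ)))))}

/-- A subset `Δ ⊆ X_ℝ` is integral: a bounded convex polytope equal to the convex hull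
of `Δ ∩ X`, symmetric about `0`, containing `0`, with `Δ ∩ X` containing a ℤ-basis. -/
def IsIntegral {g : ℕ} (Δ : Set (Fin g → ℝ)) : Prop :=
  Bornology.IsBounded Δ ∧
  Δ = convexHull ℝ (Δ ∩ Set.range (iota (g := g))) ∧
  Δ = -Δ ∧ (0 : Fin g → ℝ) ∈ Δ ∧
  ∃ b : Module.Basis (Fin g) ℤ (Fin g → ℤ), ∀ i, iota (b i) ∈ Δ

/-- `Σ_ℓ^α = (α + 2ℓφ(X^∨)) ∩ Σ_ℓ`. -/
def SigmaAlpha {g : ℕ} {Y : Submodule ℤ (Fin g → ℤ)}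
    (φ : ((Fin g → ℤ) →ₗ[ℤ] ℤ) → Y) (ℓ : ℕ) (α : Fin g → ℤ) : Set (Fin g → ℤ) :=
  {β | β ∈ SigmaL φ ℓ ∧ ∃ u : (Fin g → ℤ) →ₗ[ℤ] ℤ, β = α + (2 * (ℓ : ℤ)) • ((φ u : Fin g → ℤ))}

/-- The convex cone generated by a set `S` (the set of all nonnegative combinations). -/
def conicHull {M : Type*} [AddCommMonoid M] [Module ℝ M] (S : Set M) : Set M :=
  {y | ∃ (n : ℕ) (c : Fin n → ℝ) (v : Fin n → M),
    (∀ i, 0 ≤ c i) ∧ (∀ i, v i ∈ S) ∧ y = ∑ i, c i • v i}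

/-- `Cone(C_ℓ^β)`: the convex cone in `X_ℝ` generated by `{γ − β : γ ∈ Σ_ℓ}`. -/
def coneC {g : ℕ} {Y : Submodule ℤ (Fin g → ℤ)}
    (φ : ((Fin g → ℤ) →ₗ[ℤ] ℤ) → Y) (ℓ : ℕ) (β : Fin g → ℤ) : Set (Fin g → ℝ) :=
  conicHull {w | ∃ γ ∈ SigmaL φ ℓ, w = iota (γ - β)}


section QuadraticForm

variable {V : Type*} [AddCommGroup V] [Module ℝ V] (Bb : V →ₗ[ℝ] V →ₗ[ℝ] ℝ)

lemma apply_self_nonneg_of_pos (hBb : ∀ v, v ≠ 0 → 0 < Bb v v) (v : V) : 0 ≤ Bb v v := by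
  rcases eq_or_ne v 0 with rfl | hv
  · simp
  · exact (hBb v hv).le

lemma apply_smul_smul_self (c : ℝ) (x : V) : Bb (c • x) (c • x) = c ^ 2 * Bb x x := by
  simp only [map_smul, LinearMap.smul_apply, smul_eq_mul]
  ring

variable (hsymm : ∀ x y, Bb x y = Bb y x) (hpos : ∀ v, 0 ≤ Bb v v)

include hsymm in
lemma apply_add_add_self (x e : V) :
    Bb (x + e) (x + e) = Bb x x + 2 * Bb x e + Bb e e := by
  simp only [map_add, LinearMap.add_apply, hsymm e x]
  ring

include hsymm hpos in
lemma two_mul_apply_le {δ : ℝ} (hδ : 0 < δ) (x e : V) :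
    2 * Bb x e ≤ δ * Bb x x + Bb e e / δ := by
  have h := hpos (δ • x + -e)
  rw [apply_add_add_self Bb hsymm, apply_smul_smul_self] at h
  simp only [map_neg, LinearMap.neg_apply, neg_neg, map_smul, LinearMap.smul_apply,
    smul_eq_mul] at h
  rw [← mul_le_mul_iff_of_pos_left hδ, mul_add, mul_div_cancel₀ _ hδ.ne']
  linarith

include hsymm hpos in
lemma apply_add_self_le {δ : ℝ} (hδ : 0 < δ) (x e : V) :
    Bb (x + e) (x + e) ≤ (1 + δ) * Bb x x + (1 + 1 / δ) * Bb e e := by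
  have h := two_mul_apply_le Bb hsymm hpos hδ x e
  rw [apply_add_add_self Bb hsymm]
  rw [div_eq_mul_one_div] at h
  linarith

include hsymm hpos in
lemma le_apply_add_self {δ : ℝ} (hδ : 0 < δ) (x e : V) :
    (1 - δ) * Bb x x - 1 / δ * Bb e e ≤ Bb (x + e) (x + e) := by
  have h := two_mul_apply_le Bb hsymm hpos hδ x (-e)
  simp only [map_neg, LinearMap.neg_apply, neg_neg] at h
  rw [apply_add_add_self Bb hsymm]
  rw [div_eq_mul_one_div] at h
  linarith [hpos e]

include hsymm hpos in
lemma half_le_apply_three_quarters_add {x e : V} (hx : 1600 * Bb e e ≤ Bb x x) :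
    Bb x x / 2 ≤ Bb ((3 / 4 : ℝ) • x + e) ((3 / 4 : ℝ) • x + e) := by
  have h := le_apply_add_self Bb hsymm hpos (δ := 1 / 10) (by norm_num) ((3 / 4 : ℝ) • x) e
  rw [apply_smul_smul_self] at h
  linarith

include hsymm hpos in
lemma le_apply_sub_apply_quarter_parts (x e e' : V) :
    Bb x x / 4 - 6 * (Bb e e + Bb e' e') ≤ Bb x x
      - Bb ((3 / 4 : ℝ) • x + e) ((3 / 4 : ℝ) • x + e)
      - Bb ((1 / 4 : ℝ) • x + e') ((1 / 4 : ℝ) • x + e') := by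
  have h₁ := apply_add_self_le Bb hsymm hpos (δ := 1 / 5) (by norm_num) ((3 / 4 : ℝ) • x) e
  have h₂ := apply_add_self_le Bb hsymm hpos (δ := 1 / 5) (by norm_num) ((1 / 4 : ℝ) • x) e'
  rw [apply_smul_smul_self] at h₁ h₂
  linarith

end QuadraticForm

lemma continuous_apply_self {V : Type*} [NormedAddCommGroup V] [NormedSpace ℝ V]
    [FiniteDimensional ℝ V] (Bb : V →ₗ[ℝ] V →ₗ[ℝ] ℝ) : Continuous fun v => Bb v v :=
  let C : V →L[ℝ] V →L[ℝ] ℝ :=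
    LinearMap.toContinuousLinearMap (LinearMap.toContinuousLinearMap.toLinearMap ∘ₗ Bb)
  C.continuous.clm_apply continuous_id

lemma exists_apply_self_le_of_isBounded {V : Type*} [NormedAddCommGroup V] [NormedSpace ℝ V]
    [FiniteDimensional ℝ V] (Bb : V →ₗ[ℝ] V →ₗ[ℝ] ℝ) {s : Set V}
    (hs : Bornology.IsBounded s) : ∃ c, ∀ v ∈ s, Bb v v ≤ c := by
  obtain ⟨r, hr⟩ := (Metric.isBounded_iff_subset_closedBall 0).1 hs
  obtain ⟨c, hc⟩ := (isCompact_closedBall (0 : V) r).bddAbove_image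
    (continuous_apply_self Bb).continuousOn
  exact ⟨c, fun v hv => hc ⟨v, hr hv, rfl⟩⟩

@[simp] lemma iota_add {g : ℕ} (v w : Fin g → ℤ) : iota (v + w) = iota v + iota w := by
  funext i; simp [iota]

@[simp] lemma iota_sub {g : ℕ} (v w : Fin g → ℤ) : iota (v - w) = iota v - iota w := by
  funext i; simp [iota]

@[simp] lemma iota_zsmul {g : ℕ} (c : ℤ) (v : Fin g → ℤ) : iota (c • v) = (c : ℝ) • iota v := by
  funext i; simp [iota]

lemma norm_iota_floor_smul_sub_le {g : ℕ} (c : ℝ) (x : Fin g → ℤ) :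
    ‖iota (fun i => ⌊c * x i⌋) - c • iota x‖ ≤ 1 := by
  refine (pi_norm_le_iff_of_nonneg zero_le_one).2 fun i => ?_
  simp only [Pi.sub_apply, Pi.smul_apply, iota, smul_eq_mul, Real.norm_eq_abs, abs_le]
  constructor <;> linarith [Int.floor_le (c * x i), Int.lt_floor_add_one (c * x i)]

section Lattice

variable {g : ℕ} {Y : Submodule ℤ (Fin g → ℤ)} {B : Y →ₗ[ℤ] (Fin g → ℤ) →ₗ[ℤ] ℤ} {N : ℕ}
  {φ : ((Fin g → ℤ) →ₗ[ℤ] ℤ) → Y} {ℓ : ℕ}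
  (hBsymm : ∀ y z : Y, B y (z : Fin g → ℤ) = B z (y : Fin g → ℤ))
  (hBpos : ∀ y : Y, y ≠ 0 → 0 < B y (y : Fin g → ℤ)) (hNpos : 0 < N)
  (hφ : ∀ u : (Fin g → ℤ) →ₗ[ℤ] ℤ, B (φ u) = (N : ℤ) • u)

include hBpos hφ in
lemma phi_add (u v : (Fin g → ℤ) →ₗ[ℤ] ℤ) : φ (u + v) = φ u + φ v := by
  have hinj : Function.Injective B := (injective_iff_map_eq_zero B).2 fun y hy =>
    by_contra fun hy0 => (hBpos y hy0).ne' (by simp [hy])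
  exact hinj (by rw [map_add, hφ, hφ, hφ, smul_add])

include hBpos hφ in
lemma phi_neg (u : (Fin g → ℤ) →ₗ[ℤ] ℤ) : φ (-u) = -φ u :=
  (AddMonoidHom.mk' φ (phi_add hBpos hφ)).map_neg u

include hBpos hφ in
lemma phi_sub (u v : (Fin g → ℤ) →ₗ[ℤ] ℤ) : φ (u - v) = φ u - φ v :=
  (AddMonoidHom.mk' φ (phi_add hBpos hφ)).map_sub u v

include hBsymm hNpos hφ in
lemma apply_phi_comm (u v : (Fin g → ℤ) →ₗ[ℤ] ℤ) : u (φ v) = v (φ u) := by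
  have h := hBsymm (φ v) (φ u)
  rw [hφ, hφ, LinearMap.smul_apply, LinearMap.smul_apply, smul_eq_mul, smul_eq_mul] at h
  exact (mul_left_cancel₀ (by exact_mod_cast hNpos.ne') h).symm

include hBpos hφ in
lemma El_neg (u : (Fin g → ℤ) →ₗ[ℤ] ℤ) : El φ ℓ (-u) = El φ ℓ u := by
  simp [El, phi_neg hBpos hφ]

include hBsymm hBpos hNpos hφ in
lemma El_sub (z u : (Fin g → ℤ) →ₗ[ℤ] ℤ) :
    El φ ℓ (z - u) = El φ ℓ z + El φ ℓ u - 2 * ℓ * u (φ z) := by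
  simp only [El, phi_sub hBpos hφ, Submodule.coe_sub, map_sub, LinearMap.sub_apply,
    apply_phi_comm hBsymm hNpos hφ z u]
  ring

include hBpos hφ in
lemma abs_le_El_proj {γ : Fin g → ℤ} (hγ : γ ∈ SigmaL φ ℓ) (i : Fin g) :
    |γ i| ≤ El φ ℓ (LinearMap.proj i) := by
  have h₁ := hγ (LinearMap.proj i)
  have h₂ := hγ (-LinearMap.proj i)
  rw [El_neg hBpos hφ] at h₂
  simp only [LinearMap.neg_apply, LinearMap.proj_apply] at h₁ h₂
  exact abs_le.2 ⟨by linarith, by linarith⟩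

include hBpos hφ in
lemma isBounded_iota_SigmaL : Bornology.IsBounded (iota '' SigmaL φ ℓ) := by
  refine isBounded_iff_forall_norm_le.2
    ⟨∑ i, |(El φ ℓ (LinearMap.proj i) : ℝ)|, ?_⟩
  rintro _ ⟨γ, hγ, rfl⟩
  refine (pi_norm_le_iff_of_nonneg (by positivity)).2 fun i => ?_
  calc ‖iota γ i‖ = |(γ i : ℝ)| := Real.norm_eq_abs _
    _ ≤ |(El φ ℓ (LinearMap.proj i) : ℝ)| := by
        rw [← Int.cast_abs]
        exact (Int.cast_le.2 (abs_le_El_proj hBpos hφ hγ i)).trans (le_abs_self _)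
    _ ≤ _ := Finset.single_le_sum (f := fun j => |(El φ ℓ (LinearMap.proj j) : ℝ)|)
        (fun j _ => abs_nonneg _) (Finset.mem_univ i)

variable {Bb : (Fin g → ℝ) →ₗ[ℝ] (Fin g → ℝ) →ₗ[ℝ] ℝ}
  (hBbsymm : ∀ x y : Fin g → ℝ, Bb x y = Bb y x)
  (hBbpos : ∀ x : Fin g → ℝ, x ≠ 0 → 0 < Bb x x)
  (hBbcompat : ∀ (y : Y) (x : Fin g → ℤ), Bb (iota (y : Fin g → ℤ)) (iota x) = (B y x : ℝ))

include hφ hBbcompat in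
lemma apply_iota_phi (u : (Fin g → ℤ) →ₗ[ℤ] ℤ) (w : Fin g → ℤ) :
    Bb (iota (φ u : Fin g → ℤ)) (iota w) = N * u w := by
  rw [hBbcompat, hφ]
  simp

include hφ hBbsymm hBbcompat in
lemma apply_iota_add_phi (v : Fin g → ℤ) (z : (Fin g → ℤ) →ₗ[ℤ] ℤ) :
    Bb (iota (v + (2 * (ℓ : ℤ)) • (φ z : Fin g → ℤ)))
        (iota (v + (2 * (ℓ : ℤ)) • (φ z : Fin g → ℤ))) =
      Bb (iota v) (iota v) + 4 * ℓ * N * ((z v + El φ ℓ z : ℤ) : ℝ) := by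
  simp only [iota_add, iota_zsmul, map_add, map_smul, LinearMap.add_apply,
    LinearMap.smul_apply, smul_eq_mul, hBbsymm (iota v), apply_iota_phi hφ hBbcompat, El]
  push_cast
  ring

include hBsymm hBpos hNpos hφ hBbsymm hBbpos hBbcompat in
lemma exists_mem_SigmaL_add_phi (hℓ : 0 < ℓ) (x : Fin g → ℤ) :
    ∃ γ ∈ SigmaL φ ℓ, ∃ z, x = γ + (2 * (ℓ : ℤ)) • (φ z : Fin g → ℤ) := by
  have h4 : (0 : ℝ) < 4 * ℓ * N := by positivity
  -- `γ` is the point of least norm in `x - 2ℓφ(X^∨)`: since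
  -- `‖x - 2ℓφ(z)‖² = ‖x‖² + 4ℓN(E_ℓ(z) - z(x))`, it is found by minimising the integer
  -- `E_ℓ(z) - z(x)`, which is bounded below.
  have hbdd : ∀ z, -(Bb (iota x) (iota x) / (4 * ℓ * N)) ≤ ((El φ ℓ z - z x : ℤ) : ℝ) := by
    intro z
    have h := apply_self_nonneg_of_pos Bb hBbpos
      (iota (x + (2 * (ℓ : ℤ)) • (φ (-z) : Fin g → ℤ)))
    rw [apply_iota_add_phi hφ hBbsymm hBbcompat, El_neg hBpos hφ, LinearMap.neg_apply] at h
    rw [neg_le_iff_add_nonneg, add_div' _ _ _ h4.ne']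
    push_cast at h ⊢
    exact div_nonneg (by linarith) h4.le
  obtain ⟨_, ⟨z₀, rfl⟩, hmin⟩ := Int.exists_least_of_bdd
    (P := fun k => ∃ z, El φ ℓ z - z x = k)
    ⟨⌈-(Bb (iota x) (iota x) / (4 * ℓ * N))⌉, by
      rintro _ ⟨z, rfl⟩
      exact Int.ceil_le.2 (hbdd z)⟩
    ⟨_, 0, rfl⟩
  refine ⟨x - (2 * (ℓ : ℤ)) • (φ z₀ : Fin g → ℤ), fun u => ?_, z₀, by abel⟩
  have h := hmin _ ⟨z₀ - u, rfl⟩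
  rw [El_sub hBsymm hBpos hNpos hφ] at h
  simp only [map_sub, map_zsmul, LinearMap.sub_apply, smul_eq_mul] at h ⊢
  linarith

include hBsymm hBpos hNpos hφ hBbsymm hBbpos hBbcompat in
lemma exists_mem_SigmaL_D_mul_eq (hℓ : 0 < ℓ) {D : (Fin g → ℤ) → ℤ}
    (hD : ∀ γ ∈ SigmaL φ ℓ, ∀ z : (Fin g → ℤ) →ₗ[ℤ] ℤ,
      D (γ + (2 * (ℓ : ℤ)) • ((φ z : Fin g → ℤ))) = El φ ℓ z + z γ)
    (x : Fin g → ℤ) :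
    ∃ γ ∈ SigmaL φ ℓ,
      (D x : ℝ) * (4 * ℓ * N) = Bb (iota x) (iota x) - Bb (iota γ) (iota γ) := by
  obtain ⟨γ, hγ, z, rfl⟩ :=
    exists_mem_SigmaL_add_phi hBsymm hBpos hNpos hφ hBbsymm hBbpos hBbcompat hℓ x
  refine ⟨γ, hγ, ?_⟩
  rw [hD γ hγ z, apply_iota_add_phi hφ hBbsymm hBbcompat]
  push_cast
  ring

include hBsymm hBpos hNpos hφ hBbsymm hBbpos hBbcompat in
lemma exists_split (hℓ : 0 < ℓ) {D : (Fin g → ℤ) → ℤ}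
    (hD : ∀ γ ∈ SigmaL φ ℓ, ∀ z : (Fin g → ℤ) →ₗ[ℤ] ℤ,
      D (γ + (2 * (ℓ : ℤ)) • ((φ z : Fin g → ℤ))) = El φ ℓ z + z γ)
    (α : Fin g → ℤ) :
    ∃ R > 0, ∀ x : Fin g → ℤ, R ≤ Bb (iota x) (iota x) → ∃ x₁ : Fin g → ℤ,
      Bb (iota x) (iota x) / 2 ≤ Bb (iota x₁) (iota x₁) ∧ D x₁ + D (x - x₁ + α) < D x := by
  have hpos := apply_self_nonneg_of_pos Bb hBbpos
  have h4 : (0 : ℝ) < 4 * ℓ * N := by positivity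
  obtain ⟨K, hK⟩ :=
    exists_apply_self_le_of_isBounded Bb (isBounded_iota_SigmaL (ℓ := ℓ) hBpos hφ)
  obtain ⟨c, hc⟩ := exists_apply_self_le_of_isBounded Bb
    (Metric.isBounded_closedBall (x := 0) (r := ‖iota α‖ + 1))
  -- `1600|c|` is the threshold of `half_le_apply_three_quarters_add`, and `4(12|c| + |K|)`
  -- makes the excess of `D` below positive.
  refine ⟨1648 * |c| + 4 * |K| + 1, by positivity, fun x hx => ?_⟩
  set x₁ : Fin g → ℤ := fun i => ⌊(3 / 4 : ℝ) * x i⌋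
  set d := iota x₁ - (3 / 4 : ℝ) • iota x
  have hd : ‖d‖ ≤ 1 := norm_iota_floor_smul_sub_le _ x
  have hdc : Bb d d ≤ c :=
    hc d (mem_closedBall_zero_iff.2 (by linarith [norm_nonneg (iota α)]))
  have hαdc : Bb (iota α - d) (iota α - d) ≤ c :=
    hc _ (mem_closedBall_zero_iff.2 ((norm_sub_le _ _).trans (by linarith)))
  have hx₁ : iota x₁ = (3 / 4 : ℝ) • iota x + d := by simp [d]
  have hx₂ : iota (x - x₁ + α) = (1 / 4 : ℝ) • iota x + (iota α - d) := by
    simp only [d, iota_add, iota_sub]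
    module
  refine ⟨x₁, ?_, ?_⟩
  · rw [hx₁]
    exact half_le_apply_three_quarters_add Bb hBbsymm hpos
      (by linarith [le_abs_self c, abs_nonneg c, abs_nonneg K])
  · obtain ⟨γ, hγ, hDx⟩ :=
      exists_mem_SigmaL_D_mul_eq hBsymm hBpos hNpos hφ hBbsymm hBbpos hBbcompat hℓ hD x
    obtain ⟨γ₁, -, hD₁⟩ :=
      exists_mem_SigmaL_D_mul_eq hBsymm hBpos hNpos hφ hBbsymm hBbpos hBbcompat hℓ hD x₁
    obtain ⟨γ₂, -, hD₂⟩ := exists_mem_SigmaL_D_mul_eq hBsymm hBpos hNpos hφ hBbsymm hBbpos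
      hBbcompat hℓ hD (x - x₁ + α)
    have hgain := le_apply_sub_apply_quarter_parts Bb hBbsymm hpos (iota x) d (iota α - d)
    rw [← hx₁, ← hx₂] at hgain
    have hγK := hK (iota γ) ⟨γ, hγ, rfl⟩
    have h : ((D x₁ + D (x - x₁ + α) : ℤ) : ℝ) * (4 * ℓ * N) < (D x : ℝ) * (4 * ℓ * N) := by
      rw [Int.cast_add, add_mul]
      linarith [hpos (iota γ₁), hpos (iota γ₂), le_abs_self c, abs_nonneg c, le_abs_self K]
    exact_mod_cast lt_of_mul_lt_mul_right h h4.le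

end Lattice

section WeightMonoid

variable {X : Type*} [AddCommGroup X]

def weightMonoid (D : X → ℤ) (α : X) : AddSubmonoid (ℤ × X) :=
  AddSubmonoid.closure (insert ((1 : ℤ), (0 : X)) {p : ℤ × X | ∃ y : X, p = (D y, y - α)})

lemma mk_mem_weightMonoid (D : X → ℤ) (α y : X) : (D y, y - α) ∈ weightMonoid D α :=
  AddSubmonoid.subset_closure (Set.mem_insert_of_mem _ ⟨y, rfl⟩)

lemma natCast_mk_zero_mem_weightMonoid (D : X → ℤ) (α : X) (k : ℕ) :
    ((k : ℤ), (0 : X)) ∈ weightMonoid D α := by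
  have h : ((1 : ℤ), (0 : X)) ∈ weightMonoid D α :=
    AddSubmonoid.subset_closure (Set.mem_insert _ _)
  simpa using nsmul_mem h k

lemma mem_weightMonoid_of_split {D : X → ℤ} {α : X} {f : X → ℝ} {R : ℝ} (hR : 0 ≤ R)
    (hsplit : ∀ x, R ≤ f x → ∃ x₁, f x / 2 ≤ f x₁ ∧ D x₁ + D (x - x₁ + α) < D x)
    (t : ℕ) (x : X) (hx : 2 ^ t * R ≤ f x) : (D x - t, x - α) ∈ weightMonoid D α := by
  induction t generalizing x with
  | zero => simpa using mk_mem_weightMonoid D α x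
  | succ t ih =>
    rw [pow_succ] at hx
    obtain ⟨x₁, hf, hD⟩ := hsplit x (by nlinarith [one_le_pow₀ (M₀ := ℝ) (n := t) one_le_two])
    obtain ⟨k, hk⟩ : ∃ k : ℕ, D x = D x₁ + D (x - x₁ + α) + 1 + k :=
      ⟨(D x - D x₁ - D (x - x₁ + α) - 1).toNat, by omega⟩
    have hsum : (D x - (t + 1 : ℕ), x - α) =
        (D x₁ - t, x₁ - α) + (D (x - x₁ + α), x - x₁ + α - α) + ((k : ℤ), 0) := by
      ext
      · simp only [Prod.fst_add, hk]
        push_cast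
        ring
      · simp only [Prod.snd_add]
        abel
    rw [hsum]
    exact add_mem (add_mem (ih x₁ (by linarith)) (mk_mem_weightMonoid D α _))
      (natCast_mk_zero_mem_weightMonoid D α k)

end WeightMonoid

theorem statement10_general
    (g : ℕ)
    (Y : Submodule ℤ (Fin g → ℤ))
    (B : Y →ₗ[ℤ] (Fin g → ℤ) →ₗ[ℤ] ℤ)
    (hBsymm : ∀ y z : Y, B y (z : Fin g → ℤ) = B z (y : Fin g → ℤ))
    (hBpos : ∀ y : Y, y ≠ 0 → 0 < B y (y : Fin g → ℤ))
    (N : ℕ) (hNpos : 0 < N)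
    (φ : ((Fin g → ℤ) →ₗ[ℤ] ℤ) → Y)
    (hφ : ∀ u : (Fin g → ℤ) →ₗ[ℤ] ℤ, B (φ u) = (N : ℤ) • u)
    (Bb : (Fin g → ℝ) →ₗ[ℝ] (Fin g → ℝ) →ₗ[ℝ] ℝ)
    (hBbsymm : ∀ x y : Fin g → ℝ, Bb x y = Bb y x)
    (hBbpos : ∀ x : Fin g → ℝ, x ≠ 0 → 0 < Bb x x)
    (hBbcompat : ∀ (y : Y) (x : Fin g → ℤ), Bb (iota (y : Fin g → ℤ)) (iota x) = (B y x : ℝ))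
    (ℓ : ℕ) (hℓ : 0 < ℓ)
    (D : (Fin g → ℤ) → ℤ)
    (hD : ∀ γ ∈ SigmaL φ ℓ, ∀ z : (Fin g → ℤ) →ₗ[ℤ] ℤ,
      D (γ + (2 * (ℓ : ℤ)) • ((φ z : Fin g → ℤ))) = El φ ℓ z + z γ)
    (α : Fin g → ℤ) :
    ∃ Mstar : ℝ, 0 < Mstar ∧ ∀ (t : ℕ) (x : Fin g → ℤ),
      (2 : ℝ) ^ t * Mstar ≤ Bb (iota x) (iota x) / (4 * (ℓ : ℝ) * (N : ℝ)) →
      ((D x - (t : ℤ), x - α) ∈ AddSubmonoid.closure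
        (insert ((1 : ℤ), (0 : Fin g → ℤ))
          {p : ℤ × (Fin g → ℤ) | ∃ y : Fin g → ℤ, p = (D y, y - α)})) := by
  have h4 : (0 : ℝ) < 4 * ℓ * N := by positivity
  obtain ⟨R, hR, hsplit⟩ :=
    exists_split hBsymm hBpos hNpos hφ hBbsymm hBbpos hBbcompat hℓ hD α
  refine ⟨R / (4 * ℓ * N), by positivity, mem_weightMonoid_of_split (by positivity) ?_⟩
  intro x hx
  obtain ⟨x₁, hx₁, hDx₁⟩ := hsplit x ((div_le_div_iff_of_pos_right h4).1 hx)
  exact ⟨x₁, by rw [div_right_comm]; exact div_le_div_of_nonneg_right hx₁ h4.le, hDx₁⟩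

/-- there is `M* > 0` such that whenever `C_ℓ(x) ≥ 2^t·M*`, the element
`(D_ℓ(x) − t, x − α)` lies in the weight monoid `M_α` (i.e. `s^{D_ℓ(x)}w^{x−α} ∈ I^t·A_{ℓ,α,0}`). -/
theorem statement10
    (g : ℕ) (hg : 1 ≤ g)
    (Y : Submodule ℤ (Fin g → ℤ))
    (hYfin : Y.toAddSubgroup.index ≠ 0)
    (B : Y →ₗ[ℤ] (Fin g → ℤ) →ₗ[ℤ] ℤ)
    (hBsymm : ∀ y z : Y, B y (z : Fin g → ℤ) = B z (y : Fin g → ℤ))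
    (hBpos : ∀ y : Y, y ≠ 0 → 0 < B y (y : Fin g → ℤ))
    (N : ℕ) (hN : N = (LinearMap.range B).toAddSubgroup.index) (hNpos : 0 < N)
    (φ : ((Fin g → ℤ) →ₗ[ℤ] ℤ) → Y)
    (hφ : ∀ u : (Fin g → ℤ) →ₗ[ℤ] ℤ, B (φ u) = (N : ℤ) • u)
    (Bb : (Fin g → ℝ) →ₗ[ℝ] (Fin g → ℝ) →ₗ[ℝ] ℝ)
    (hBbsymm : ∀ x y : Fin g → ℝ, Bb x y = Bb y x)
    (hBbpos : ∀ x : Fin g → ℝ, x ≠ 0 → 0 < Bb x x)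
    (hBbcompat : ∀ (y : Y) (x : Fin g → ℤ), Bb (iota (y : Fin g → ℤ)) (iota x) = (B y x : ℝ))
    (ℓ : ℕ) (hℓ : 0 < ℓ)
    (D : (Fin g → ℤ) → ℤ)
    (hD : ∀ γ ∈ SigmaL φ ℓ, ∀ z : (Fin g → ℤ) →ₗ[ℤ] ℤ,
      D (γ + (2 * (ℓ : ℤ)) • ((φ z : Fin g → ℤ))) = El φ ℓ z + z γ)
    (hint : IsIntegral (VorP Bb φ ℓ 0))
    (α : Fin g → ℤ) (hα : α ∈ SigmaL φ ℓ) :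
    ∃ Mstar : ℝ, 0 < Mstar ∧ ∀ (t : ℕ) (x : Fin g → ℤ),
      (2 : ℝ) ^ t * Mstar ≤ Bb (iota x) (iota x) / (4 * (ℓ : ℝ) * (N : ℝ)) →
      ((D x - (t : ℤ), x - α) ∈ AddSubmonoid.closure
        (insert ((1 : ℤ), (0 : Fin g → ℤ))
          {p : ℤ × (Fin g → ℤ) | ∃ y : Fin g → ℤ, p = (D y, y - α)})) :=
  statement10_general g Y B hBsymm hBpos N hNpos φ hφ Bb hBbsymm hBbpos hBbcompat ℓ hℓ D hD α

end NFC
end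

section
/- For α ∈ Σ_ℓ the following are equivalent: (a) Σ_ℓ^α = {α}; (b) Σ_ℓ^α has exactly one element; (c) α lies in the topological interior of Σ_ℓ(0) in X_ℝ. -/
/-!
Membership `α ∈ Σ_ℓ` gives `u(α) ≤ ℓ·u(φ(u))` for all `u`, and both conditions turn out to be
equivalent to strictness of these inequalities whenever `φ(u) ≠ 0`. If equality holds at `u`,
then `α - 2ℓφ(u)` is a second point of `Σ_ℓ^α`; conversely a point `α + 2ℓφ(u) ≠ α` of `Σ_ℓ^α`
violates strictness at `-u`. On the other side, `Σ_ℓ(0)` is the intersection of the half-spaces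
`2 B̄(x, w) ≤ B̄(w, w)`, `w = 2ℓφ(u)`, which at `x = α` read `4ℓN·u(α) ≤ 4ℓ²N·u(φ(u))`. An interior
point satisfies them strictly; conversely strict integral inequalities hold with the uniform gap
`4ℓN`, and a uniform gap keeps the infinitely many half-spaces away from a neighbourhood of `α`.
-/

open scoped BigOperators Pointwise

namespace NFC

open Filter Topology

section VoronoiCell

variable {E : Type*} [NormedAddCommGroup E] [NormedSpace ℝ E]

def voronoiCell (Bb : E →ₗ[ℝ] E →ₗ[ℝ] ℝ) (W : Set E) : Set E :=
  {x | ∀ w ∈ W, 2 * Bb x w ≤ Bb w w}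

theorem continuous_bilin_diag [FiniteDimensional ℝ E] (Bb : E →ₗ[ℝ] E →ₗ[ℝ] ℝ) :
    Continuous fun x => Bb x x := by
  let Bc : E →L[ℝ] E →L[ℝ] ℝ :=
    LinearMap.toContinuousLinearMap (LinearMap.toContinuousLinearMap.toLinearMap ∘ₗ Bb)
  change Continuous fun x => Bc x x
  fun_prop

theorem two_mul_lt_of_mem_interior_voronoiCell {Bb : E →ₗ[ℝ] E →ₗ[ℝ] ℝ} {W : Set E} {x w : E}
    (hx : x ∈ interior (voronoiCell Bb W)) (hw : w ∈ W) (hww : 0 < Bb w w) :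
    2 * Bb x w < Bb w w := by
  have hline : Tendsto (fun t : ℝ => x + t • w) (𝓝[>] 0) (𝓝 x) := by
    have : Continuous fun t : ℝ => x + t • w := by fun_prop
    simpa using (this.tendsto 0).mono_left nhdsWithin_le_nhds
  obtain ⟨t, hcell, ht⟩ :=
    ((hline.eventually (mem_interior_iff_mem_nhds.mp hx)).and self_mem_nhdsWithin).exists
  have h := hcell w hw
  simp only [map_add, map_smul, LinearMap.add_apply, LinearMap.smul_apply, smul_eq_mul] at h
  nlinarith [mul_pos (Set.mem_Ioi.mp ht) hww]

/-- A uniform gap `c` in the inequalities defining the cell at `α` survives on a neighbourhood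
of `α`: by AM-GM, `2 Bb(x - α, w) ≤ s Bb(w, w) + Bb(x - α, x - α) / s`, which is absorbed by the
gap when `Bb(w, w)` is small and by `Bb(w, w) - 2 Bb(α, w) ≥ Bb(w, w) / 2 - 2 Bb(α, α)` when it
is large. -/
theorem mem_interior_voronoiCell_of_gap [FiniteDimensional ℝ E] {Bb : E →ₗ[ℝ] E →ₗ[ℝ] ℝ}
    (hsymm : ∀ x y, Bb x y = Bb y x) (hpsd : ∀ x, 0 ≤ Bb x x) {W : Set E} {α : E} {c : ℝ}
    (hc : 0 < c) (hgap : ∀ w ∈ W, w ≠ 0 → 2 * Bb α w + c ≤ Bb w w) :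
    α ∈ interior (voronoiCell Bb W) := by
  set K := 8 * Bb α α + 2 * c
  have hK : 2 * c ≤ K := by linarith [hpsd α]
  have hK0 : 0 < K := by linarith
  set s := c / (2 * K)
  have hs : 0 < s := by positivity
  have hsK : s * K = c / 2 := by rw [div_mul_eq_mul_div, mul_div_mul_right _ _ hK0.ne']
  have hs_le : s ≤ 1 / 4 := by
    rw [div_le_div_iff₀ (by positivity) (by norm_num)]
    linarith
  have hU : IsOpen {x | Bb (x - α) (x - α) < s * c / 2} :=
    isOpen_lt ((continuous_bilin_diag Bb).comp (by fun_prop)) continuous_const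
  refine mem_interior.mpr ⟨_, fun x hx w hw => ?_, hU, by simp [hs, hc]⟩
  rcases eq_or_ne w 0 with rfl | hw0
  · simp
  obtain ⟨h, rfl⟩ : ∃ h, x = α + h := ⟨x - α, by abel⟩
  simp only [Set.mem_ofPred_eq, add_sub_cancel_left] at hx
  have hα_w : 2 * Bb α w ≤ 2 * Bb α α + Bb w w / 2 := by
    have := hpsd ((2 : ℝ) • α - w)
    simp only [map_sub, map_smul, LinearMap.sub_apply, LinearMap.smul_apply, smul_eq_mul,
      hsymm w α] at this
    linarith
  have hh_w : 2 * Bb h w ≤ s * Bb w w + c / 2 := by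
    have := hpsd (s • w - h)
    simp only [map_sub, map_smul, LinearMap.sub_apply, LinearMap.smul_apply, smul_eq_mul,
      hsymm w h] at this
    have : s * (2 * Bb h w) ≤ s * (s * Bb w w + c / 2) := by nlinarith
    exact le_of_mul_le_mul_left this hs
  have hgap_w := hgap w hw hw0
  simp only [map_add, LinearMap.add_apply]
  rcases le_total (Bb w w) K with hsmall | hlarge
  · nlinarith [mul_le_mul_of_nonneg_left hsmall hs.le]
  · nlinarith [mul_le_mul_of_nonneg_right hs_le (hpsd w)]

end VoronoiCell

section Lattice

variable {g : ℕ} {Y : Submodule ℤ (Fin g → ℤ)} {B : Y →ₗ[ℤ] (Fin g → ℤ) →ₗ[ℤ] ℤ} {N : ℕ}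
  {φ : Module.Dual ℤ (Fin g → ℤ) → Y} {ℓ : ℕ} {α : Fin g → ℤ}

theorem phi_sub_s11 (hBpos : ∀ y : Y, y ≠ 0 → 0 < B y (y : Fin g → ℤ))
    (hφ : ∀ u, B (φ u) = (N : ℤ) • u) (u v : Module.Dual ℤ (Fin g → ℤ)) :
    φ (u - v) = φ u - φ v := by
  by_contra h
  have := hBpos _ (sub_ne_zero.mpr h)
  simp [hφ, smul_sub] at this

theorem apply_phi_comm_s11 (hBsymm : ∀ y z : Y, B y (z : Fin g → ℤ) = B z (y : Fin g → ℤ))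
    (hφ : ∀ u, B (φ u) = (N : ℤ) • u) (hN : N ≠ 0) (u v : Module.Dual ℤ (Fin g → ℤ)) :
    u (φ v) = v (φ u) := by
  have := hBsymm (φ u) (φ v)
  simp only [hφ, LinearMap.smul_apply, smul_eq_mul] at this
  exact mul_left_cancel₀ (by exact_mod_cast hN) this

theorem self_mem_sigmaAlpha (hφ0 : φ 0 = 0) (hα : α ∈ SigmaL φ ℓ) : α ∈ SigmaAlpha φ ℓ α :=
  ⟨hα, 0, by simp [hφ0]⟩

theorem apply_le_of_mem_sigmaL (hφneg : ∀ u, φ (-u) = -φ u) (hα : α ∈ SigmaL φ ℓ)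
    (u : Module.Dual ℤ (Fin g → ℤ)) : u α ≤ ℓ * u (φ u) := by
  have := hα (-u)
  simp only [El, hφneg, LinearMap.neg_apply, Submodule.coe_neg, map_neg] at this
  linarith

theorem sigmaAlpha_eq_singleton_iff (hsub : ∀ u v, φ (u - v) = φ u - φ v)
    (hcomm : ∀ u v : Module.Dual ℤ (Fin g → ℤ), u (φ v) = v (φ u)) (hℓ : 0 < ℓ)
    (hα : α ∈ SigmaL φ ℓ) :
    SigmaAlpha φ ℓ α = {α} ↔ ∀ u, (φ u : Fin g → ℤ) ≠ 0 → u α < ℓ * u (φ u) := by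
  have hφneg (u) : φ (-u) = -φ u := map_neg (AddMonoidHom.ofMapSub φ hsub) u
  have hφ0 : φ 0 = 0 := map_zero (AddMonoidHom.ofMapSub φ hsub)
  have hℓ0 : (2 * ℓ : ℤ) ≠ 0 := by positivity
  constructor
  · intro h u hu
    refine (apply_le_of_mem_sigmaL hφneg hα u).lt_of_ne fun heq => hu ?_
    -- under equality at `u`, the inequality of `α - 2ℓφ(u)` at `v` is that of `α` at `v - u`
    have hmem : α + (2 * ℓ : ℤ) • (φ (-u) : Fin g → ℤ) ∈ SigmaAlpha φ ℓ α := by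
      refine ⟨fun v => ?_, -u, rfl⟩
      have := hα (v - u)
      simp only [El, hsub, hφneg, LinearMap.sub_apply, Submodule.coe_sub,
        Submodule.coe_neg, map_sub, map_neg, map_add, map_smul, smul_eq_mul] at this ⊢
      linear_combination this - (ℓ : ℤ) * hcomm u v - heq
    rw [h, Set.mem_singleton_iff, add_eq_left, hφneg, smul_eq_zero] at hmem
    simpa [hℓ0] using hmem
  · intro hP
    refine Set.eq_singleton_iff_unique_mem.mpr ⟨self_mem_sigmaAlpha hφ0 hα, ?_⟩
    rintro _ ⟨hβ, u, rfl⟩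
    by_contra hne
    have hu : (φ u : Fin g → ℤ) ≠ 0 := fun h => hne (by simp [h])
    have h1 := hβ (-u)
    have h2 := hP (-u) (by simpa [hφneg] using hu)
    simp only [El, hφneg, LinearMap.neg_apply, Submodule.coe_neg, map_neg, map_add, map_smul,
      smul_eq_mul] at h1 h2
    linarith

theorem iota_eq_zero {x : Fin g → ℤ} : iota x = 0 ↔ x = 0 := by
  simp [funext_iff, iota]

theorem Bb_iota_smul_phi {Bb : (Fin g → ℝ) →ₗ[ℝ] (Fin g → ℝ) →ₗ[ℝ] ℝ}
    (hφ : ∀ u, B (φ u) = (N : ℤ) • u)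
    (hBbcompat : ∀ (y : Y) (x : Fin g → ℤ), Bb (iota (y : Fin g → ℤ)) (iota x) = (B y x : ℝ))
    (k : ℤ) (u : Module.Dual ℤ (Fin g → ℤ)) (x : Fin g → ℤ) :
    Bb (iota (k • (φ u : Fin g → ℤ))) (iota x) = k * N * u x := by
  rw [← Submodule.coe_smul, hBbcompat, map_smul, hφ]
  push_cast [LinearMap.smul_apply, smul_eq_mul]
  ring

theorem vorP_zero_eq {Bb : (Fin g → ℝ) →ₗ[ℝ] (Fin g → ℝ) →ₗ[ℝ] ℝ} (hφ0 : φ 0 = 0)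
    (hBbsymm : ∀ x y, Bb x y = Bb y x) (hpsd : ∀ x, 0 ≤ Bb x x) :
    VorP Bb φ ℓ 0 =
      voronoiCell Bb (Set.range fun u => iota ((2 * ℓ : ℤ) • (φ u : Fin g → ℤ))) := by
  ext x
  simp only [VorP, voronoiCell, Set.forall_mem_range, hφ0, Set.mem_ofPred_eq]
  refine forall_congr' fun u => ?_
  rw [Real.sqrt_le_sqrt_iff (hpsd _)]
  simp only [ZeroMemClass.coe_zero, smul_zero, iota_eq_zero.mpr, sub_zero, map_sub,
    LinearMap.sub_apply, hBbsymm _ x]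
  constructor <;> intro h <;> linarith

theorem mem_interior_vorP_zero_iff {Bb : (Fin g → ℝ) →ₗ[ℝ] (Fin g → ℝ) →ₗ[ℝ] ℝ}
    (hφ : ∀ u, B (φ u) = (N : ℤ) • u) (hφ0 : φ 0 = 0) (hNpos : 0 < N)
    (hBbsymm : ∀ x y, Bb x y = Bb y x) (hBbpos : ∀ x, x ≠ 0 → 0 < Bb x x)
    (hBbcompat : ∀ (y : Y) (x : Fin g → ℤ), Bb (iota (y : Fin g → ℤ)) (iota x) = (B y x : ℝ))
    (hℓ : 0 < ℓ) :
    iota α ∈ interior (VorP Bb φ ℓ 0) ↔ ∀ u, (φ u : Fin g → ℤ) ≠ 0 → u α < ℓ * u (φ u) := by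
  have hpsd (x : Fin g → ℝ) : 0 ≤ Bb x x := by
    rcases eq_or_ne x 0 with rfl | hx
    · simp
    · exact (hBbpos x hx).le
  set w := fun u => iota ((2 * ℓ : ℤ) • (φ u : Fin g → ℤ))
  have hαw (u) : 2 * Bb (iota α) (w u) = 4 * ℓ * N * u α := by
    rw [hBbsymm, Bb_iota_smul_phi hφ hBbcompat]
    push_cast
    ring
  have hww (u) : Bb (w u) (w u) = 4 * ℓ * N * (ℓ * u (φ u)) := by
    rw [Bb_iota_smul_phi hφ hBbcompat, map_smul, smul_eq_mul]
    push_cast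
    ring
  have hw0 (u) : w u = 0 ↔ (φ u : Fin g → ℤ) = 0 := by
    simp only [w, iota_eq_zero, smul_eq_zero, mul_eq_zero, OfNat.ofNat_ne_zero, Nat.cast_eq_zero,
      hℓ.ne', false_or]
  have h4 : (0 : ℝ) < 4 * ℓ * N := by positivity
  rw [vorP_zero_eq hφ0 hBbsymm hpsd]
  constructor
  · intro h u hu
    have := two_mul_lt_of_mem_interior_voronoiCell h ⟨u, rfl⟩ (hBbpos _ ((hw0 u).not.mpr hu))
    rw [hαw, hww] at this
    exact_mod_cast lt_of_mul_lt_mul_left this h4.le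
  · intro hP
    -- strict inequalities between integers, scaled by `4ℓN`, hold with gap `4ℓN`
    refine mem_interior_voronoiCell_of_gap hBbsymm hpsd h4 ?_
    rintro _ ⟨u, rfl⟩ hu
    have : (u α : ℝ) + 1 ≤ ℓ * u (φ u) := by exact_mod_cast hP u ((hw0 u).not.mp hu)
    rw [hαw, hww]
    nlinarith [mul_le_mul_of_nonneg_left this h4.le]

end Lattice

theorem statement11_general
    (g : ℕ)
    (Y : Submodule ℤ (Fin g → ℤ))
    (B : Y →ₗ[ℤ] (Fin g → ℤ) →ₗ[ℤ] ℤ)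
    (hBsymm : ∀ y z : Y, B y (z : Fin g → ℤ) = B z (y : Fin g → ℤ))
    (hBpos : ∀ y : Y, y ≠ 0 → 0 < B y (y : Fin g → ℤ))
    (N : ℕ) (hNpos : 0 < N)
    (φ : ((Fin g → ℤ) →ₗ[ℤ] ℤ) → Y)
    (hφ : ∀ u : (Fin g → ℤ) →ₗ[ℤ] ℤ, B (φ u) = (N : ℤ) • u)
    (Bb : (Fin g → ℝ) →ₗ[ℝ] (Fin g → ℝ) →ₗ[ℝ] ℝ)
    (hBbsymm : ∀ x y : Fin g → ℝ, Bb x y = Bb y x)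
    (hBbpos : ∀ x : Fin g → ℝ, x ≠ 0 → 0 < Bb x x)
    (hBbcompat : ∀ (y : Y) (x : Fin g → ℤ), Bb (iota (y : Fin g → ℤ)) (iota x) = (B y x : ℝ))
    (ℓ : ℕ) (hℓ : 0 < ℓ)
    (α : Fin g → ℤ) (hα : α ∈ SigmaL φ ℓ) :
    (SigmaAlpha φ ℓ α = {α} ↔ ∃ β : Fin g → ℤ, SigmaAlpha φ ℓ α = {β}) ∧
    (SigmaAlpha φ ℓ α = {α} ↔ iota α ∈ interior (VorP Bb φ ℓ 0)) := by
  have hsub := phi_sub_s11 hBpos hφ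
  have hφ0 : φ 0 = 0 := by simpa using hsub 0 0
  refine ⟨⟨fun h => ⟨α, h⟩, fun ⟨β, h⟩ => ?_⟩, ?_⟩
  · have hαβ : α = β := by simpa [h] using self_mem_sigmaAlpha hφ0 hα
    rw [h, hαβ]
  · rw [sigmaAlpha_eq_singleton_iff hsub (apply_phi_comm_s11 hBsymm hφ hNpos.ne') hℓ hα,
      mem_interior_vorP_zero_iff hφ hφ0 hNpos hBbsymm hBbpos hBbcompat hℓ]

/-- for `α ∈ Σ_ℓ`, TFAE: `Σ_ℓ^α = {α}`; `Σ_ℓ^α` has exactly one element;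
`α` lies in the interior of `Σ_ℓ(0)`. -/
theorem statement11
    (g : ℕ) (hg : 1 ≤ g)
    (Y : Submodule ℤ (Fin g → ℤ))
    (hYfin : Y.toAddSubgroup.index ≠ 0)
    (B : Y →ₗ[ℤ] (Fin g → ℤ) →ₗ[ℤ] ℤ)
    (hBsymm : ∀ y z : Y, B y (z : Fin g → ℤ) = B z (y : Fin g → ℤ))
    (hBpos : ∀ y : Y, y ≠ 0 → 0 < B y (y : Fin g → ℤ))
    (N : ℕ) (hN : N = (LinearMap.range B).toAddSubgroup.index) (hNpos : 0 < N)
    (φ : ((Fin g → ℤ) →ₗ[ℤ] ℤ) → Y)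
    (hφ : ∀ u : (Fin g → ℤ) →ₗ[ℤ] ℤ, B (φ u) = (N : ℤ) • u)
    (Bb : (Fin g → ℝ) →ₗ[ℝ] (Fin g → ℝ) →ₗ[ℝ] ℝ)
    (hBbsymm : ∀ x y : Fin g → ℝ, Bb x y = Bb y x)
    (hBbpos : ∀ x : Fin g → ℝ, x ≠ 0 → 0 < Bb x x)
    (hBbcompat : ∀ (y : Y) (x : Fin g → ℤ), Bb (iota (y : Fin g → ℤ)) (iota x) = (B y x : ℝ))
    (ℓ : ℕ) (hℓ : 0 < ℓ)
    (α : Fin g → ℤ) (hα : α ∈ SigmaL φ ℓ) :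
    (SigmaAlpha φ ℓ α = {α} ↔ ∃ β : Fin g → ℤ, SigmaAlpha φ ℓ α = {β}) ∧
    (SigmaAlpha φ ℓ α = {α} ↔ iota α ∈ interior (VorP Bb φ ℓ 0)) :=
  statement11_general g Y B hBsymm hBpos N hNpos φ hφ Bb hBbsymm hBbpos hBbcompat ℓ hℓ α hα

end NFC
end
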